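/- Let Ĥ = {(x,y) ∈ ℝ² : y > −L̂} be an open half-plane (L̂ > 0), J ≥ 1, α_{ij} > 0 for i ≠ j, and γ_i > 0 for 1 ≤ i ≤ J. Define Ξ(z₁,…,z_J) = Σ_{i≠j} α_{ij} ln(1/|z_i − z_j|) + Σ_i γ_i ln(1/d(z_i, ∂Ĥ)) on Ĥ^J minus the diagonal set D_J. Then Ξ has no critical points. -/

import Mathlib

/-!
Push the highest point `z k` straight up. Since it is the highest point, its distance to every
other point does not decrease, so the pair energy does not increase, while its distance to `∂Ĥ`
grows, so the boundary energy drops at rate `γ k / d(z k, ∂Ĥ)`. The derivative of `Ξ` in this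
direction is therefore at most `-γ k / d(z k, ∂Ĥ) < 0`.
-/

open Real Finset
open scoped InnerProductSpace

theorem HasDerivAt.nonpos_of_isMaxOn_Ici {f : ℝ → ℝ} {f' a : ℝ} (hf : HasDerivAt f f' a)
    (hmax : IsMaxOn f (Set.Ici a) a) : f' ≤ 0 := by
  have hone : (1 : ℝ) ∈ posTangentConeAt (Set.Ici a) a :=
    mem_posTangentConeAt_of_segment_subset
      ((segment_subset_Icc (by linarith)).trans Set.Icc_subset_Ici_self)
  simpa using hmax.localize.hasFDerivWithinAt_nonpos hf.hasFDerivAt.hasFDerivWithinAt hone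

section PairEnergy

variable {E : Type*} [NormedAddCommGroup E] [InnerProductSpace ℝ E]

theorem dist_le_dist_add_smul_of_inner_nonneg {p q u : E} (h : 0 ≤ ⟪p - q, u⟫_ℝ) {t : ℝ}
    (ht : 0 ≤ t) : dist p q ≤ dist (p + t • u) q := by
  rw [dist_eq_norm, dist_eq_norm, add_sub_right_comm, ← sq_le_sq₀ (norm_nonneg _) (norm_nonneg _),
    norm_add_sq_real, inner_smul_right]
  nlinarith [sq_nonneg ‖t • u‖]

theorem log_one_div_dist_add_smul_le {p q u : E} (hpq : p ≠ q) (h : 0 ≤ ⟪p - q, u⟫_ℝ) {t : ℝ}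
    (ht : 0 ≤ t) : log (1 / dist (p + t • u) q) ≤ log (1 / dist p q) := by
  have hd : 0 < dist p q := dist_pos.2 hpq
  have hle := dist_le_dist_add_smul_of_inner_nonneg h ht
  exact log_le_log (one_div_pos.2 (hd.trans_le hle)) (one_div_le_one_div_of_le hd hle)

variable {ι : Type*} [Fintype ι] [DecidableEq ι]

noncomputable def pairEnergy (α : ι → ι → ℝ) (w : ι → E) : ℝ :=
  ∑ i, ∑ j, if i = j then 0 else α i j * log (1 / dist (w i) (w j))

theorem pairEnergy_add_smul_single_le {α : ι → ι → ℝ} (hα : ∀ i j, i ≠ j → 0 ≤ α i j)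
    {w : ι → E} (hw : Function.Injective w) {k : ι} {u : E} (hk : ∀ i, 0 ≤ ⟪w k - w i, u⟫_ℝ)
    {t : ℝ} (ht : 0 ≤ t) : pairEnergy α (w + t • (Pi.single k u : ι → E)) ≤ pairEnergy α w := by
  refine sum_le_sum fun i _ ↦ sum_le_sum fun j _ ↦ ?_
  by_cases hij : i = j
  · simp [hij]
  simp only [hij, if_false]
  refine mul_le_mul_of_nonneg_left ?_ (hα i j hij)
  have hne : w i ≠ w j := hw.ne hij
  by_cases hik : i = k
  · subst hik
    simpa [Pi.single_eq_of_ne (Ne.symm hij)] using log_one_div_dist_add_smul_le hne (hk j) ht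
  by_cases hjk : j = k
  · subst hjk
    simpa [Pi.single_eq_of_ne hij, dist_comm (w i)] using
      log_one_div_dist_add_smul_le hne.symm (hk i) ht
  · simp [Pi.single_eq_of_ne hik, Pi.single_eq_of_ne hjk]

end PairEnergy

section BoundaryEnergy

variable {ι : Type*} [Fintype ι] [DecidableEq ι]

noncomputable def boundaryEnergy (γ : ι → ℝ) (L : ℝ) (w : ι → EuclideanSpace ℝ (Fin 2)) : ℝ :=
  ∑ i, γ i * log (1 / (w i 1 + L))

theorem boundaryEnergy_add_smul_single (γ : ι → ℝ) (L : ℝ) (w : ι → EuclideanSpace ℝ (Fin 2))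
    (k : ι) (t : ℝ) :
    boundaryEnergy γ L
      (w + t • (Pi.single k (EuclideanSpace.single 1 1) : ι → EuclideanSpace ℝ (Fin 2))) =
      γ k * log (1 / (w k 1 + t + L)) + ∑ i ∈ univ.erase k, γ i * log (1 / (w i 1 + L)) := by
  rw [boundaryEnergy, ← add_sum_erase _ _ (mem_univ k)]
  congr 1
  · simp
  · refine sum_congr rfl fun i hi ↦ ?_
    simp [Pi.single_eq_of_ne (ne_of_mem_erase hi)]

end BoundaryEnergy

theorem no_critical_points_upper_half_plane (Lhat : ℝ)
    (J : ℕ) (hJ : 1 ≤ J)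
    (α : Fin J → Fin J → ℝ) (hα : ∀ i j, i ≠ j → 0 < α i j)
    (γ : Fin J → ℝ) (hγ : ∀ i, 0 < γ i)
    (z : Fin J → EuclideanSpace ℝ (Fin 2))
    (hzH : ∀ i, -Lhat < z i 1) (hz : Function.Injective z) :
    ¬ HasFDerivAt
        (fun w : Fin J → EuclideanSpace ℝ (Fin 2) =>
          (∑ i : Fin J, ∑ j : Fin J,
            if i = j then 0 else α i j * Real.log (1 / dist (w i) (w j)))
          + ∑ i : Fin J, γ i * Real.log (1 / (w i 1 + Lhat)))
        (0 : (Fin J → EuclideanSpace ℝ (Fin 2)) →L[ℝ] ℝ) z := by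
  intro hcrit
  obtain ⟨k, -, hk⟩ := exists_max_image univ (fun i ↦ z i 1) ⟨⟨0, hJ⟩, mem_univ _⟩
  set v : Fin J → EuclideanSpace ℝ (Fin 2) := Pi.single k (EuclideanSpace.single 1 1)
  set ψ : ℝ → ℝ := fun t ↦ γ k * log (1 / (z k 1 + t + Lhat))
  have hpos : 0 < z k 1 + Lhat := by linarith [hzH k]
  have hup : ∀ i, 0 ≤ ⟪z k - z i, EuclideanSpace.single 1 1⟫_ℝ := fun i ↦ by
    simpa [EuclideanSpace.inner_single_right] using hk i (mem_univ i)
  -- `hcrit` is about `pairEnergy α + boundaryEnergy γ Lhat`, written out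
  have hΞ : HasDerivAt (fun t : ℝ ↦ pairEnergy α (z + t • v) + boundaryEnergy γ Lhat (z + t • v))
      0 0 :=
    (hcrit.comp_hasDerivAt_of_eq 0 (((hasDerivAt_id 0).smul_const v).const_add z)
      (by simp)).congr_deriv (by simp)
  have hψ : HasDerivAt ψ (-(γ k / (z k 1 + Lhat))) 0 := by
    have := ((((hasDerivAt_id (0 : ℝ)).const_add (z k 1)).add_const Lhat).log
      (by simpa using hpos.ne')).const_mul (-γ k)
    simpa [ψ, log_inv, div_eq_mul_inv] using this
  have hmax : IsMaxOn (fun t ↦ pairEnergy α (z + t • v) + boundaryEnergy γ Lhat (z + t • v) - ψ t)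
      (Set.Ici 0) 0 := by
    refine isMaxOn_iff.2 fun t (ht : 0 ≤ t) ↦ ?_
    have hpair : pairEnergy α (z + t • v) ≤ pairEnergy α z :=
      pairEnergy_add_smul_single_le (fun i j hij ↦ (hα i j hij).le) hz hup ht
    have hbdry : ∀ s : ℝ, boundaryEnergy γ Lhat (z + s • v) =
        ψ s + ∑ i ∈ univ.erase k, γ i * log (1 / (z i 1 + Lhat)) :=
      boundaryEnergy_add_smul_single γ Lhat z k
    have hbdry₀ := hbdry 0
    rw [zero_smul, add_zero] at hbdry₀
    simp only [zero_smul, add_zero]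
    linarith [hbdry t]
  have hslope := (hΞ.sub hψ).nonpos_of_isMaxOn_Ici hmax
  have hrate := div_pos (hγ k) hpos
  linarith
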